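/- If i is odd then ξ_i = a; if N = 2^n K with K odd then ξ_N ≠ ξ_{2N}; consequently ξ_N ≠ ξ_{2N} for every N ≥ 1. -/
import Mathlib


inductive A : Type
  | a | b | c | d
deriving DecidableEq

def subst : A → List A
  | A.a => [A.a, A.c, A.a]
  | A.b => [A.d]
  | A.c => [A.b]
  | A.d => [A.c]

def substW (u : List A) : List A := u.flatMap subst

def wrd (n : ℕ) : List A := substW^[n - 1] [A.a]

def ltr (n : ℕ) : List A := substW^[n - 1] [A.c]

def seg (ξ : ℕ → A) (s m : ℕ) : List A := (List.range m).map fun i => ξ (s + 1 + i)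

def IsFixed (ξ : ℕ → A) : Prop :=
  ∀ N : ℕ, seg ξ 0 ((substW (seg ξ 0 N)).length) = substW (seg ξ 0 N)

/-! Auxiliary development -/

def nxt : A → A
  | A.a => A.c
  | A.b => A.d
  | A.c => A.b
  | A.d => A.c

def zeta (i : ℕ) : A := nxt^[padicValNat 2 i] A.a

def pref (N : ℕ) : List A := (List.range N).map fun i => zeta (i + 1)

lemma nxt_ne_a (x : A) : nxt x ≠ A.a := by cases x <;> simp [nxt]

lemma nxt_ne_self (x : A) : nxt x ≠ x := by cases x <;> simp [nxt]

lemma subst_eq (x : A) (hx : x ≠ A.a) : subst x = [nxt x] := by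
  cases x <;> simp_all [subst, nxt]

lemma zeta_odd (i : ℕ) (h : i % 2 = 1) : zeta i = A.a := by
  have h2 : ¬ (2 ∣ i) := by omega
  simp [zeta, padicValNat.eq_zero_of_not_dvd h2]

lemma val_two_mul (M : ℕ) (hM : M ≠ 0) :
    padicValNat 2 (2 * M) = padicValNat 2 M + 1 := by
  have := padicValNat.mul (p := 2) (a := 2) (b := M) (by norm_num) hM
  rw [this, padicValNat.self (by norm_num)]
  omega

lemma zeta_two_mul (M : ℕ) (hM : M ≠ 0) : zeta (2 * M) = nxt (zeta M) := by
  rw [zeta, zeta, val_two_mul M hM, Function.iterate_succ_apply']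

lemma pref_length (N : ℕ) : (pref N).length = N := by simp [pref]

lemma key (N : ℕ) : substW (pref N) = pref (N + 2 * ((N + 1) / 2)) := by
  induction N with
  | zero => simp [pref, substW]
  | succ N ih =>
    have hsplit : pref (N + 1) = pref N ++ [zeta (N + 1)] := by
      simp [pref, List.range_succ]
    have hsub : substW (pref (N + 1)) = substW (pref N) ++ subst (zeta (N + 1)) := by
      simp [hsplit, substW]
    rcases Nat.even_or_odd N with ⟨m, hm⟩ | ⟨m, hm⟩
    · -- N = 2m, N+1 odd
      subst hm
      have hN : m + m + 2 * ((m + m + 1) / 2) = 4 * m := by omega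
      have hN1 : (m + m + 1) + 2 * ((m + m + 1 + 1) / 2) = 4 * m + 3 := by omega
      have hz : zeta (m + m + 1) = A.a := zeta_odd _ (by omega)
      have h1 : zeta (4 * m + 1) = A.a := zeta_odd _ (by omega)
      have h3 : zeta (4 * m + 3) = A.a := zeta_odd _ (by omega)
      have h2 : zeta (4 * m + 2) = A.c := by
        have : 4 * m + 2 = 2 * (2 * m + 1) := by ring
        rw [this, zeta_two_mul _ (by omega), zeta_odd _ (by omega)]
        rfl
      rw [hsub, ih, hN, hN1, hz]
      have e1 : pref (4 * m + 3) = pref (4 * m) ++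
          [zeta (4 * m + 1), zeta (4 * m + 2), zeta (4 * m + 3)] := by
        simp [pref, List.range_succ]
      rw [e1, h1, h2, h3]
      rfl
    · -- N = 2m+1, N+1 = 2(m+1)
      subst hm
      have hN : (2 * m + 1) + 2 * ((2 * m + 1 + 1) / 2) = 4 * m + 3 := by omega
      have hN1 : (2 * m + 1 + 1) + 2 * ((2 * m + 1 + 1 + 1) / 2) = 4 * m + 4 := by omega
      have hz : zeta (2 * m + 2) = nxt (zeta (m + 1)) := by
        have : 2 * m + 2 = 2 * (m + 1) := by ring
        rw [this, zeta_two_mul _ (by omega)]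
      have hzne : zeta (2 * m + 2) ≠ A.a := by rw [hz]; exact nxt_ne_a _
      have h4 : zeta (4 * m + 4) = nxt (zeta (2 * m + 2)) := by
        have : 4 * m + 4 = 2 * (2 * m + 2) := by ring
        rw [this, zeta_two_mul _ (by omega)]
      rw [hsub, ih, hN, hN1, subst_eq _ hzne]
      have e1 : pref (4 * m + 4) = pref (4 * m + 3) ++ [zeta (4 * m + 4)] := by
        simp [pref, List.range_succ]
      rw [e1, h4]

lemma step (ξ : ℕ → A) (hξ : IsFixed ξ) (N : ℕ) (h : seg ξ 0 N = pref N) :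
    seg ξ 0 (N + 2 * ((N + 1) / 2)) = pref (N + 2 * ((N + 1) / 2)) := by
  have hN := hξ N
  rw [h, key N, pref_length] at hN
  exact hN

lemma xi_one (ξ : ℕ → A) (hξ : IsFixed ξ) : seg ξ 0 1 = pref 1 := by
  have h := hξ 1
  have hseg : seg ξ 0 1 = [ξ 1] := by simp [seg, List.range_succ]
  have hp : pref 1 = [A.a] := by
    simp [pref, List.range_succ, zeta, padicValNat.eq_zero_of_not_dvd (by omega : ¬ (2:ℕ) ∣ 1)]
  rw [hseg, hp]
  cases hx : ξ 1 with
  | a => rfl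
  | b => rw [hseg, hx] at h; simp [substW, subst, seg, List.range_succ, hx] at h
  | c => rw [hseg, hx] at h; simp [substW, subst, seg, List.range_succ, hx] at h
  | d => rw [hseg, hx] at h; simp [substW, subst, seg, List.range_succ, hx] at h

lemma reach (ξ : ℕ → A) (hξ : IsFixed ξ) : ∀ M : ℕ, ∃ N, M + 1 ≤ N ∧ seg ξ 0 N = pref N := by
  intro M
  induction M with
  | zero => exact ⟨1, le_refl 1, xi_one ξ hξ⟩
  | succ M ih =>
    obtain ⟨N, hN, hs⟩ := ih
    exact ⟨N + 2 * ((N + 1) / 2), by omega, step ξ hξ N hs⟩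

lemma xi_eq (ξ : ℕ → A) (hξ : IsFixed ξ) (i : ℕ) (hi : 1 ≤ i) : ξ i = zeta i := by
  obtain ⟨N, hN, hs⟩ := reach ξ hξ i
  have h := congrArg (fun l => l[i - 1]?) hs
  simp only [seg, pref, List.getElem?_map, List.getElem?_range, show i - 1 < N by omega,
    if_pos, Option.map_some] at h
  have : 0 + 1 + (i - 1) = i := by omega
  rw [this] at h
  have : i - 1 + 1 = i := by omega
  rw [this] at h
  exact Option.some.inj h

lemma zeta_ne (M : ℕ) (hM : 1 ≤ M) : zeta M ≠ zeta (2 * M) := by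
  rw [zeta_two_mul M (by omega)]
  exact (nxt_ne_self _).symm

theorem stmt13 (ξ : ℕ → A) (hξ : IsFixed ξ) :
    (∀ i : ℕ, i % 2 = 1 → ξ i = A.a) ∧
    (∀ n K : ℕ, K % 2 = 1 → ξ (2 ^ n * K) ≠ ξ (2 * (2 ^ n * K))) ∧
    (∀ N : ℕ, 1 ≤ N → ξ N ≠ ξ (2 * N)) := by
  refine ⟨fun i hi => ?_, fun n K hK => ?_, fun N hN => ?_⟩
  · rw [xi_eq ξ hξ i (by omega)]; exact zeta_odd i hi
  · have h1 : 1 ≤ 2 ^ n * K := by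
      have : 1 ≤ 2 ^ n := Nat.one_le_two_pow
      have : 1 ≤ K := by omega
      exact Nat.one_le_iff_ne_zero.mpr (by positivity)
    rw [xi_eq ξ hξ _ h1, xi_eq ξ hξ _ (by omega)]
    exact zeta_ne _ h1
  · rw [xi_eq ξ hξ _ hN, xi_eq ξ hξ _ (by omega)]
    exact zeta_ne _ hN
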